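/- Under the saturation assumption, if the saturated independent set Î is not contained in any independent set of G containing i* or j* (i.e., Î∉𝕀*_+), then the function C_2(δ) = ∑_{I∈𝕀*}T_I − ∑_{I∈𝕀̄*}T̄_I (evaluated at α(δ)) can be written on (0,δ̄] as a quotient P(δ)/Q(δ) of real polynomials with Q(δ)≠0 for all δ∈(0,δ̄] and with constant coefficient P(0) > 0. -/

import Mathlib

open Classical Finset

noncomputable section

def nbr {V : Type} [Fintype V] (G : SimpleGraph V) (S : Finset V) : Finset V :=
  Finset.univ.filter fun j => ∃ i ∈ S, G.Adj i j

def aSum {V : Type} (α : V → ℝ) (S : Finset V) : ℝ := ∑ i ∈ S, α i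

def IsIndep {V : Type} (G : SimpleGraph V) (I : Finset V) : Prop :=
  I.Nonempty ∧ ∀ i ∈ I, ∀ j ∈ I, ¬ G.Adj i j

def indepSets {V : Type} [Fintype V] (G : SimpleGraph V) : Finset (Finset V) :=
  Finset.univ.filter fun I => IsIndep G I

def Ncond {V : Type} [Fintype V] (G : SimpleGraph V) (α : V → ℝ) : Prop :=
  ∀ I ∈ indepSets G, aSum α I < aSum α (nbr G I)

def Tlist {V : Type} [Fintype V] [DecidableEq V] (G : SimpleGraph V) (α : V → ℝ) :
    List V → Finset V → ℝ
  | [], _ => 1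
  | i :: l, P =>
      α i / (aSum α (nbr G (insert i P)) - aSum α (insert i P)) * Tlist G α l (insert i P)

def Erat {V : Type} [Fintype V] [DecidableEq V] (G : SimpleGraph V) (α : V → ℝ) :
    List V → Finset V → ℝ
  | [], _ => 0
  | i :: l, P =>
      aSum α (nbr G (insert i P)) / (aSum α (nbr G (insert i P)) - aSum α (insert i P)) +
        Erat G α l (insert i P)

def TI {V : Type} [Fintype V] [DecidableEq V] (G : SimpleGraph V) (α : V → ℝ) (I : Finset V) : ℝ :=
  ∑ l ∈ I.toList.permutations.toFinset, Tlist G α l ∅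

def EI {V : Type} [Fintype V] [DecidableEq V] (G : SimpleGraph V) (α : V → ℝ) (I : Finset V) : ℝ :=
  ∑ l ∈ I.toList.permutations.toFinset, Erat G α l ∅ * Tlist G α l ∅

def meanQ {V : Type} [Fintype V] [DecidableEq V] (G : SimpleGraph V) (α : V → ℝ) : ℝ :=
  (1 + ∑ I ∈ indepSets G, TI G α I)⁻¹ * ∑ I ∈ indepSets G, EI G α I

def IsWord {V : Type} (G : SimpleGraph V) (w : List V) : Prop :=
  w.Pairwise fun a b => ¬ G.Adj a b

def piHatAux {V : Type} [Fintype V] [DecidableEq V] (G : SimpleGraph V) (α : V → ℝ) :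
    List V → Finset V → ℝ
  | [], _ => 1
  | i :: l, P => α i / aSum α (nbr G (insert i P)) * piHatAux G α l (insert i P)

def piHat {V : Type} [Fintype V] [DecidableEq V] (G : SimpleGraph V) (α : V → ℝ) (w : List V) : ℝ :=
  piHatAux G α w ∅

def addEdge {V : Type} (G : SimpleGraph V) (u v : V) : SimpleGraph V :=
  G ⊔ SimpleGraph.fromEdgeSet {s(u, v)}

end

def RatPosCst (db : ℝ) (F : ℝ → ℝ) : Prop :=
  ∃ P Q : Polynomial ℝ, 0 < P.coeff 0 ∧
    ∀ x : ℝ, 0 < x → x ≤ db → Q.eval x ≠ 0 ∧ F x = P.eval x / Q.eval x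


/-!
Every `T_I` is a sum of products of factors `α_i / (|α_{E(S)}| - |α_S|)` over nonempty subsets `S`
of `I`. For `I ∈ 𝕀*` such an `S` is independent and differs from `Î` (as `Î ∉ 𝕀*_+`), so its
denominator is positive on `(0, δ̄]` by Ncond and also at `δ = 0`, where only `Î` is saturated.
Adding the edge only enlarges neighbourhoods, so the same holds in `Ḡ`. Hence `C₂` is a rational
function whose denominator is positive on all of `[0, δ̄]`, and `P(0)/Q(0) = C₂(0)`. Finally
`C₂(0) > 0`: `𝕀̄* ⊆ 𝕀*`, `T̄_I ≤ T_I` termwise, and `T̄_{{i*}} < T_{{i*}}` because `j*` is a new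
neighbour of `i*`.
-/

open Polynomial

def RatOn (s : Set ℝ) (F : ℝ → ℝ) : Prop :=
  ∃ P Q : ℝ[X], ∀ x ∈ s, 0 < Q.eval x ∧ F x = P.eval x / Q.eval x

namespace RatOn

variable {s : Set ℝ} {F G : ℝ → ℝ}

theorem of_polynomial (p : ℝ[X]) (h : ∀ x ∈ s, F x = p.eval x) : RatOn s F :=
  ⟨p, 1, fun x hx => by simp [h x hx]⟩

theorem const (c : ℝ) : RatOn s fun _ => c :=
  of_polynomial (C c) fun _ _ => by simp

theorem add (hF : RatOn s F) (hG : RatOn s G) : RatOn s fun x => F x + G x := by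
  obtain ⟨P, Q, hF⟩ := hF
  obtain ⟨P', Q', hG⟩ := hG
  refine ⟨P * Q' + P' * Q, Q * Q', fun x hx => ?_⟩
  obtain ⟨hQ, hFx⟩ := hF x hx
  obtain ⟨hQ', hGx⟩ := hG x hx
  refine ⟨by simpa using mul_pos hQ hQ', ?_⟩
  simp only [eval_add, eval_mul, hFx, hGx]
  field_simp

theorem mul (hF : RatOn s F) (hG : RatOn s G) : RatOn s fun x => F x * G x := by
  obtain ⟨P, Q, hF⟩ := hF
  obtain ⟨P', Q', hG⟩ := hG
  refine ⟨P * P', Q * Q', fun x hx => ?_⟩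
  obtain ⟨hQ, hFx⟩ := hF x hx
  obtain ⟨hQ', hGx⟩ := hG x hx
  exact ⟨by simpa using mul_pos hQ hQ', by simp only [eval_mul, hFx, hGx, div_mul_div_comm]⟩

theorem sub (hF : RatOn s F) (hG : RatOn s G) : RatOn s fun x => F x - G x := by
  simpa [sub_eq_add_neg] using hF.add ((const (-1)).mul hG)

theorem inv (hF : RatOn s F) (hpos : ∀ x ∈ s, 0 < F x) : RatOn s fun x => (F x)⁻¹ := by
  obtain ⟨P, Q, hF⟩ := hF
  refine ⟨Q, P, fun x hx => ?_⟩
  obtain ⟨hQ, hFx⟩ := hF x hx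
  have hP : 0 < P.eval x := (div_pos_iff_of_pos_right hQ).1 (hFx ▸ hpos x hx)
  exact ⟨hP, show (F x)⁻¹ = _ by rw [hFx, inv_div]⟩

theorem div (hF : RatOn s F) (hG : RatOn s G) (hpos : ∀ x ∈ s, 0 < G x) :
    RatOn s fun x => F x / G x := by
  simpa [div_eq_mul_inv] using hF.mul (hG.inv hpos)

theorem sum {ι : Type*} (t : Finset ι) {F : ι → ℝ → ℝ} (h : ∀ i ∈ t, RatOn s (F i)) :
    RatOn s fun x => ∑ i ∈ t, F i x := by
  induction t using Finset.induction_on with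
  | empty => simpa using const 0
  | insert i t hi ih =>
    simpa [Finset.sum_insert hi] using
      (h i (mem_insert_self i t)).add (ih fun j hj => h j (mem_insert_of_mem hj))

theorem ratPosCst {db : ℝ} (hdb : 0 ≤ db) (hF : RatOn (Set.Icc 0 db) F) (h0 : 0 < F 0) :
    RatPosCst db F := by
  obtain ⟨P, Q, hF⟩ := hF
  obtain ⟨hQ0, hF0⟩ := hF 0 ⟨le_rfl, hdb⟩
  refine ⟨P, Q, ?_, fun x hx hxdb => ⟨(hF x ⟨hx.le, hxdb⟩).1.ne', (hF x ⟨hx.le, hxdb⟩).2⟩⟩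
  rw [coeff_zero_eq_eval_zero]
  rw [hF0] at h0
  exact (div_pos_iff_of_pos_right hQ0).1 h0

end RatOn

theorem nonneg_at_zero_of_pos_on_Ioc {f : ℝ → ℝ} {db : ℝ} (hf : Continuous f) (hdb : 0 < db)
    (h : ∀ x, 0 < x → x ≤ db → 0 < f x) : 0 ≤ f 0 := by
  have : Set.Icc 0 db ⊆ {x | 0 ≤ f x} := by
    rw [← closure_Ioc hdb.ne]
    exact closure_minimal (fun x hx => (h x hx.1 hx.2).le) (isClosed_le continuous_const hf)
  exact this ⟨le_rfl, hdb.le⟩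

theorem mem_of_mem_permutations_toList {V : Type} [DecidableEq V] {I : Finset V} {l : List V}
    (hl : l ∈ I.toList.permutations.toFinset) : ∀ x ∈ l, x ∈ I := by
  rw [List.mem_toFinset, List.mem_permutations] at hl
  exact fun x hx => mem_toList.1 (hl.mem_iff.1 hx)

section Graph

variable {V : Type} [Fintype V]

noncomputable def slack (G : SimpleGraph V) (α : V → ℝ) (S : Finset V) : ℝ :=
  aSum α (nbr G S) - aSum α S

def SlackPos (G : SimpleGraph V) (α : V → ℝ) (I : Finset V) : Prop :=
  ∀ S ⊆ I, S.Nonempty → 0 < slack G α S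

theorem slack_affine (G : SimpleGraph V) (a b : V → ℝ) (δ : ℝ) (S : Finset V) :
    slack G (fun i => a i + b i * δ) S = slack G a S + slack G b S * δ := by
  simp only [slack, aSum, Finset.sum_add_distrib, ← Finset.sum_mul]
  ring

theorem nbr_mono {G H : SimpleGraph V} (hGH : G ≤ H) (S : Finset V) : nbr G S ⊆ nbr H S := by
  intro x
  simp only [nbr, mem_filter, mem_univ, true_and]
  exact fun ⟨i, hi, hadj⟩ => ⟨i, hi, hGH hadj⟩

theorem slack_mono {G H : SimpleGraph V} (hGH : G ≤ H) {α : V → ℝ} (hα : ∀ i, 0 ≤ α i)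
    (S : Finset V) : slack G α S ≤ slack H α S :=
  sub_le_sub_right (sum_le_sum_of_subset_of_nonneg (nbr_mono hGH S) fun i _ _ => hα i) _

theorem SlackPos.mono {G H : SimpleGraph V} (hGH : G ≤ H) {α : V → ℝ} (hα : ∀ i, 0 ≤ α i)
    {I : Finset V} (h : SlackPos G α I) : SlackPos H α I :=
  fun S hS hne => (h S hS hne).trans_le (slack_mono hGH hα S)

theorem slack_singleton_lt_addEdge {G : SimpleGraph V} {u v : V} (hne : u ≠ v)
    (hnadj : ¬ G.Adj u v) {α : V → ℝ} (hα : ∀ i, 0 < α i) :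
    slack G α {u} < slack (addEdge G u v) α {u} := by
  have hv : v ∈ nbr (addEdge G u v) {u} := by
    simp [nbr, addEdge, hne]
  have hv' : v ∉ nbr G {u} := by
    simpa [nbr] using hnadj
  exact sub_lt_sub_right (sum_lt_sum_of_subset (nbr_mono le_sup_left {u}) hv hv' (hα v)
    fun i _ _ => (hα i).le) _

theorem mem_indepSets {G : SimpleGraph V} {I : Finset V} :
    I ∈ indepSets G ↔ I.Nonempty ∧ ∀ i ∈ I, ∀ j ∈ I, ¬ G.Adj i j := by
  rw [indepSets, Finset.mem_filter]
  exact and_iff_right (Finset.mem_univ I)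

theorem indepSets_anti {G H : SimpleGraph V} (hGH : G ≤ H) : indepSets H ⊆ indepSets G :=
  fun _ hI => mem_indepSets.2 ⟨(mem_indepSets.1 hI).1,
    fun i hi j hj hadj => (mem_indepSets.1 hI).2 i hi j hj (hGH hadj)⟩

theorem mem_indepSets_of_subset {G : SimpleGraph V} {I S : Finset V} (hI : I ∈ indepSets G)
    (hSI : S ⊆ I) (hS : S.Nonempty) : S ∈ indepSets G :=
  mem_indepSets.2 ⟨hS, fun i hi j hj => (mem_indepSets.1 hI).2 i (hSI hi) j (hSI hj)⟩

theorem singleton_mem_indepSets (G : SimpleGraph V) (u : V) : {u} ∈ indepSets G := by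
  simp [mem_indepSets]

/-- At `δ = 0` the slack of an independent set is a limit of positive slacks, and it is nonzero
unless the set is the saturated one. -/
theorem slack_pos_of_ne_saturated {G : SimpleGraph V} {a b : V → ℝ} {δbar : ℝ} (hδbar : 0 < δbar)
    (hN : ∀ δ : ℝ, 0 < δ → δ ≤ δbar → Ncond G fun i => a i + b i * δ) {Ihat : Finset V}
    (huniq : ∀ J ∈ indepSets G, aSum a (nbr G J) = aSum a J → J = Ihat)
    {S : Finset V} (hS : S ∈ indepSets G) (hSI : S ≠ Ihat) {δ : ℝ} (hδ : δ ∈ Set.Icc 0 δbar) :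
    0 < slack G (fun i => a i + b i * δ) S := by
  have hpos : ∀ δ, 0 < δ → δ ≤ δbar → 0 < slack G a S + slack G b S * δ := fun δ h0 h1 => by
    rw [← slack_affine]
    exact sub_pos.2 (hN δ h0 h1 S hS)
  rcases hδ.1.eq_or_lt with rfl | h0
  · have h0 : 0 ≤ slack G a S := by
      simpa using nonneg_at_zero_of_pos_on_Ioc (by fun_prop) hδbar hpos
    have hne : slack G a S ≠ 0 := fun h => hSI (huniq S hS (sub_eq_zero.1 h))
    simpa [slack_affine] using h0.lt_of_ne' hne
  · rw [slack_affine]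
    exact hpos δ h0 hδ.2

variable [DecidableEq V]

theorem Tlist_cons (G : SimpleGraph V) (α : V → ℝ) (i : V) (l : List V) (P : Finset V) :
    Tlist G α (i :: l) P = α i / slack G α (insert i P) * Tlist G α l (insert i P) :=
  rfl

section Tlist

variable {G H : SimpleGraph V} {I : Finset V}

theorem Tlist_nonneg {α : V → ℝ} (hα : ∀ i, 0 ≤ α i) (hI : SlackPos G α I) :
    ∀ (l : List V) (P : Finset V), (∀ x ∈ l, x ∈ I) → P ⊆ I → 0 ≤ Tlist G α l P
  | [], _, _, _ => zero_le_one
  | i :: l, P, hl, hP => by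
    rw [List.forall_mem_cons] at hl
    have hiP : insert i P ⊆ I := insert_subset hl.1 hP
    rw [Tlist_cons]
    exact mul_nonneg (div_nonneg (hα i) (hI _ hiP (insert_nonempty i P)).le)
      (Tlist_nonneg hα hI l _ hl.2 hiP)

theorem Tlist_antitone (hGH : G ≤ H) {α : V → ℝ} (hα : ∀ i, 0 ≤ α i) (hI : SlackPos G α I) :
    ∀ (l : List V) (P : Finset V), (∀ x ∈ l, x ∈ I) → P ⊆ I → Tlist H α l P ≤ Tlist G α l P
  | [], _, _, _ => le_rfl
  | i :: l, P, hl, hP => by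
    rw [List.forall_mem_cons] at hl
    have hiP : insert i P ⊆ I := insert_subset hl.1 hP
    have hslack := hI _ hiP (insert_nonempty i P)
    rw [Tlist_cons, Tlist_cons]
    exact mul_le_mul (div_le_div_of_nonneg_left (hα i) hslack (slack_mono hGH hα _))
      (Tlist_antitone hGH hα hI l _ hl.2 hiP)
      (Tlist_nonneg hα (hI.mono hGH hα) l _ hl.2 hiP) (div_nonneg (hα i) hslack.le)

theorem Tlist_ratOn {s : Set ℝ} {α : ℝ → V → ℝ} (hα : ∀ i, RatOn s fun x => α x i)
    (hI : ∀ x ∈ s, SlackPos G (α x) I) :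
    ∀ (l : List V) (P : Finset V), (∀ x ∈ l, x ∈ I) → P ⊆ I →
      RatOn s fun x => Tlist G (α x) l P
  | [], _, _, _ => RatOn.const 1
  | i :: l, P, hl, hP => by
    rw [List.forall_mem_cons] at hl
    have hiP : insert i P ⊆ I := insert_subset hl.1 hP
    have hslack : RatOn s fun x => slack G (α x) (insert i P) := by
      simp only [slack, aSum]
      exact (RatOn.sum _ fun j _ => hα j).sub (RatOn.sum _ fun j _ => hα j)
    simp only [Tlist_cons]
    exact ((hα i).div hslack fun x hx => hI x hx _ hiP (insert_nonempty i P)).mul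
      (Tlist_ratOn hα hI l _ hl.2 hiP)

end Tlist

theorem TI_nonneg {G : SimpleGraph V} {α : V → ℝ} (hα : ∀ i, 0 ≤ α i) {I : Finset V}
    (hI : SlackPos G α I) : 0 ≤ TI G α I :=
  sum_nonneg fun l hl => Tlist_nonneg hα hI l ∅ (mem_of_mem_permutations_toList hl) (empty_subset I)

theorem TI_antitone {G H : SimpleGraph V} (hGH : G ≤ H) {α : V → ℝ} (hα : ∀ i, 0 ≤ α i)
    {I : Finset V} (hI : SlackPos G α I) : TI H α I ≤ TI G α I :=
  sum_le_sum fun l hl =>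
    Tlist_antitone hGH hα hI l ∅ (mem_of_mem_permutations_toList hl) (empty_subset I)

theorem TI_ratOn {G : SimpleGraph V} {s : Set ℝ} {α : ℝ → V → ℝ}
    (hα : ∀ i, RatOn s fun x => α x i) {I : Finset V} (hI : ∀ x ∈ s, SlackPos G (α x) I) :
    RatOn s fun x => TI G (α x) I :=
  RatOn.sum _ fun l hl =>
    Tlist_ratOn hα hI l ∅ (mem_of_mem_permutations_toList hl) (empty_subset I)

theorem TI_singleton (G : SimpleGraph V) (α : V → ℝ) (u : V) :
    TI G α {u} = α u / slack G α {u} := by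
  have : ({u} : Finset V).toList.permutations.toFinset = {[u]} := by
    ext l
    simp [List.mem_permutations, List.perm_singleton]
  rw [TI, this, sum_singleton, Tlist_cons, insert_empty]
  simp [Tlist]

theorem sum_TI_addEdge_lt_sum_TI {G : SimpleGraph V} {u v : V} (hne : u ≠ v)
    (hnadj : ¬ G.Adj u v) {α : V → ℝ} (hα : ∀ i, 0 < α i)
    (hI : ∀ I ∈ (indepSets G).filter (fun I => u ∈ I ∨ v ∈ I), SlackPos G α I) :
    ∑ I ∈ (indepSets (addEdge G u v)).filter (fun I => u ∈ I ∨ v ∈ I), TI (addEdge G u v) α I <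
      ∑ I ∈ (indepSets G).filter (fun I => u ∈ I ∨ v ∈ I), TI G α I := by
  have hle : G ≤ addEdge G u v := le_sup_left
  have hα' : ∀ i, 0 ≤ α i := fun i => (hα i).le
  have hsub := filter_subset_filter (fun I => u ∈ I ∨ v ∈ I) (indepSets_anti hle)
  have hu : {u} ∈ (indepSets G).filter (fun I => u ∈ I ∨ v ∈ I) := by
    simp [singleton_mem_indepSets]
  calc _ < ∑ I ∈ (indepSets (addEdge G u v)).filter (fun I => u ∈ I ∨ v ∈ I), TI G α I := by
        refine sum_lt_sum (fun I hI' => TI_antitone hle hα' (hI I (hsub hI'))) ⟨{u}, ?_, ?_⟩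
        · simp [singleton_mem_indepSets]
        · rw [TI_singleton, TI_singleton]
          exact div_lt_div_of_pos_left (hα u) (hI _ hu _ subset_rfl (singleton_nonempty u))
            (slack_singleton_lt_addEdge hne hnadj hα)
    _ ≤ _ := sum_le_sum_of_subset_of_nonneg hsub fun I hI' _ => TI_nonneg hα' (hI I hI')

end Graph

theorem stmt9_general
    {V : Type} [Fintype V] [DecidableEq V] (G : SimpleGraph V)
    (istar jstar : V) (hne : istar ≠ jstar) (hnadj : ¬ G.Adj istar jstar)
    (a b : V → ℝ) (δbar : ℝ) (hδbar : 0 < δbar)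
    (ha : ∀ i, 0 < a i)
    (hpos : ∀ δ : ℝ, 0 < δ → δ ≤ δbar → ∀ i, 0 < a i + b i * δ)
    (hN : ∀ δ : ℝ, 0 < δ → δ ≤ δbar → Ncond G fun i => a i + b i * δ)
    (Ihat : Finset V)
    (huniq : ∀ J ∈ indepSets G, aSum a (nbr G J) = aSum a J → J = Ihat)
    (hmem : ¬ ∃ J ∈ indepSets G, (istar ∈ J ∨ jstar ∈ J) ∧ Ihat ⊆ J) :
    RatPosCst δbar (fun δ =>
        (∑ I ∈ (indepSets G).filter (fun I => istar ∈ I ∨ jstar ∈ I),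
            TI G (fun i => a i + b i * δ) I) -
          ∑ I ∈ (indepSets (addEdge G istar jstar)).filter (fun I => istar ∈ I ∨ jstar ∈ I),
            TI (addEdge G istar jstar) (fun i => a i + b i * δ) I) := by
  have hα : ∀ δ ∈ Set.Icc 0 δbar, ∀ i, 0 < a i + b i * δ := fun δ hδ i => by
    rcases hδ.1.eq_or_lt with rfl | h0
    · simpa using ha i
    · exact hpos δ h0 hδ.2 i
  have hslack : ∀ I ∈ (indepSets G).filter (fun I => istar ∈ I ∨ jstar ∈ I),
      ∀ δ ∈ Set.Icc 0 δbar, SlackPos G (fun i => a i + b i * δ) I := by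
    intro I hI δ hδ S hSI hS
    rw [mem_filter] at hI
    exact slack_pos_of_ne_saturated hδbar hN huniq (mem_indepSets_of_subset hI.1 hSI hS)
      (by rintro rfl; exact hmem ⟨I, hI.1, hI.2, hSI⟩) hδ
  have hslack' : ∀ I ∈ (indepSets (addEdge G istar jstar)).filter
      (fun I => istar ∈ I ∨ jstar ∈ I), ∀ δ ∈ Set.Icc 0 δbar,
        SlackPos (addEdge G istar jstar) (fun i => a i + b i * δ) I := fun I hI δ hδ =>
    (hslack I (filter_subset_filter _ (indepSets_anti le_sup_left) hI) δ hδ).mono le_sup_left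
      fun i => (hα δ hδ i).le
  have hαrat : ∀ i, RatOn (Set.Icc 0 δbar) fun δ => a i + b i * δ := fun i =>
    RatOn.of_polynomial (C (a i) + C (b i) * X) fun _ _ => by simp
  have h0 : (0 : ℝ) ∈ Set.Icc 0 δbar := ⟨le_rfl, hδbar.le⟩
  exact RatOn.ratPosCst hδbar.le
    ((RatOn.sum _ fun I hI => TI_ratOn hαrat (hslack I hI)).sub
      (RatOn.sum _ fun I hI => TI_ratOn hαrat (hslack' I hI)))
    (sub_pos.2 (sum_TI_addEdge_lt_sum_TI hne hnadj (hα 0 h0) fun I hI => hslack I hI 0 h0))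

theorem stmt9
    {V : Type} [Fintype V] [DecidableEq V] (G : SimpleGraph V)
    (istar jstar : V) (hne : istar ≠ jstar) (hnadj : ¬ G.Adj istar jstar)
    (a b : V → ℝ) (δbar : ℝ) (hδbar : 0 < δbar)
    (ha : ∀ i, 0 < a i)
    (hpos : ∀ δ : ℝ, 0 < δ → δ ≤ δbar → ∀ i, 0 < a i + b i * δ)
    (hdist : ∀ δ : ℝ, 0 < δ → δ ≤ δbar → ∑ i, (a i + b i * δ) = 1)
    (hN : ∀ δ : ℝ, 0 < δ → δ ≤ δbar → Ncond G fun i => a i + b i * δ)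
    (Ihat : Finset V) (hIhat : Ihat ∈ indepSets G)
    (hsat : aSum a (nbr G Ihat) = aSum a Ihat)
    (huniq : ∀ J ∈ indepSets G, aSum a (nbr G J) = aSum a J → J = Ihat)
    (hmem : ¬ ∃ J ∈ indepSets G, (istar ∈ J ∨ jstar ∈ J) ∧ Ihat ⊆ J) :
    RatPosCst δbar (fun δ =>
        (∑ I ∈ (indepSets G).filter (fun I => istar ∈ I ∨ jstar ∈ I),
            TI G (fun i => a i + b i * δ) I) -
          ∑ I ∈ (indepSets (addEdge G istar jstar)).filter (fun I => istar ∈ I ∨ jstar ∈ I),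
            TI (addEdge G istar jstar) (fun i => a i + b i * δ) I) :=
  stmt9_general G istar jstar hne hnadj a b δbar hδbar ha hpos hN Ihat huniq hmem
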